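/- The reduced loop construction is functorial: a based digraph map f : (G,∗_G) → (H,∗_H) induces a well-defined based digraph map L̄f : L̄G → L̄H by ⟨γ⟩ ↦ ⟨f ∘ γ⟩, and this assignment satisfies L̄(g ∘ f) = L̄g ∘ L̄f and L̄(id_G) = id_{L̄G}. -/

import Mathlib

/-- A digraph map between adjacency relations: every arrow goes to an arrow or collapses. -/
def IsDigraphMap {V W : Type*} (A : V → V → Prop) (B : W → W → Prop) (f : V → W) : Prop :=
  ∀ v w, A v w → B (f v) (f w) ∨ f v = f w

/-- Adjacency of the line digraph `I_n` with direction function `d`: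
`d i = true` means arrow `i → i+1`, `d i = false` means arrow `i+1 → i`. -/
def lineAdj (n : ℕ) (d : ℕ → Bool) : ℕ → ℕ → Prop :=
  fun i j => (j = i + 1 ∧ i < n ∧ d i = true) ∨ (i = j + 1 ∧ j < n ∧ d j = false)

/-- Directions of the standard line digraph `J_n`: arrow `i → i+1` iff `i` is even. -/
def Jdir : ℕ → Bool := fun i => decide (Even i)

/-- A shrinking map `h : I_N → I_m`: a monotone digraph map with `h 0 = 0` and `h N = m`. -/
def IsShrinking (N m : ℕ) (dN dm : ℕ → Bool) (h : ℕ → ℕ) : Prop :=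
  IsDigraphMap (lineAdj N dN) (lineAdj m dm) h ∧ h 0 = 0 ∧ h N = m ∧
    ∀ i j, i ≤ j → j ≤ N → h i ≤ h j

/-- Adjacency of the box product `G □ H`. -/
def boxAdj {V W : Type*} (A : V → V → Prop) (B : W → W → Prop) :
    V × W → V × W → Prop :=
  fun p q => (p.1 = q.1 ∧ B p.2 q.2) ∨ (A p.1 q.1 ∧ p.2 = q.2)

/-- Adjacency of the cylinder `C_h` of a map `h : I_M → I_m` between line digraphs. -/
def cylAdjLine (M m : ℕ) (dM dm : ℕ → Bool) (h : ℕ → ℕ) :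
    ℕ ⊕ ℕ → ℕ ⊕ ℕ → Prop
  | Sum.inl i, Sum.inl j => lineAdj M dM i j
  | Sum.inr i, Sum.inr j => lineAdj m dm i j
  | Sum.inl i, Sum.inr j => i ≤ M ∧ h i = j
  | Sum.inr _, Sum.inl _ => False

/-- A based loop in `(G, x)` from a line digraph. -/
structure LoopN (V : Type*) (A : V → V → Prop) (x : V) where
  len : ℕ
  dir : ℕ → Bool
  toFun : ℕ → V
  ismap : IsDigraphMap (lineAdj len dir) A toFun
  base0 : toFun 0 = x
  base1 : toFun len = x

/-- `φ` is a subdivision of the loop `ψ`: `φ = ψ ∘ h` on its domain, `h` shrinking. -/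
def IsSubdivOfL {V : Type*} {A : V → V → Prop} {x : V} (φ ψ : LoopN V A x) : Prop :=
  ∃ h : ℕ → ℕ, IsShrinking φ.len ψ.len φ.dir ψ.dir h ∧
    ∀ i ≤ φ.len, φ.toFun i = ψ.toFun (h i)

/-- A minimal loop: no two consecutive values coincide. -/
def MinimalLoop {V : Type*} {A : V → V → Prop} {x : V} (φ : LoopN V A x) : Prop :=
  ∀ i < φ.len, φ.toFun i ≠ φ.toFun (i + 1)

/-- Subdivision equivalence of loops: both are subdivisions of a common minimal loop. -/
def SubdivRelL (V : Type*) (A : V → V → Prop) (x : V) (φ ψ : LoopN V A x) : Prop :=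
  ∃ ρ : LoopN V A x, MinimalLoop ρ ∧ IsSubdivOfL φ ρ ∧ IsSubdivOfL ψ ρ

/-- Vertices of the reduced loop digraph `L̄G`: subdivision classes of based loops. -/
def LbarV (V : Type*) (A : V → V → Prop) (x : V) := Quot (SubdivRelL V A x)

/-- Adjacency of the reduced loop digraph: `⟨f⟩ → ⟨g⟩` iff some representatives of the
classes, on the same line digraph, satisfy `f₁(v) → g₁(v)` or `f₁(v) = g₁(v)` for all
vertices `v`. -/
def LbarAdj (V : Type*) (A : V → V → Prop) (x : V) :
    LbarV V A x → LbarV V A x → Prop :=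
  fun a b => ∃ φ ψ : LoopN V A x,
    Quot.mk (SubdivRelL V A x) φ = a ∧ Quot.mk (SubdivRelL V A x) ψ = b ∧
    φ.len = ψ.len ∧ (∀ i < φ.len, φ.dir i = ψ.dir i) ∧
    ∀ i ≤ φ.len, A (φ.toFun i) (ψ.toFun i) ∨ φ.toFun i = ψ.toFun i

/-- The constant loop at the base-point. -/
def constLoopN (V : Type*) (A : V → V → Prop) (x : V) : LoopN V A x :=
  ⟨0, fun _ => true, fun _ => x,
    fun v w hvw => by
      rcases hvw with ⟨_, h, _⟩ | ⟨_, h, _⟩ <;> exact absurd h (Nat.not_lt_zero _),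
    rfl, rfl⟩

/-- Composition of digraph maps is a digraph map. -/
theorem isDigraphMap_comp {V W U : Type*} {A : V → V → Prop} {B : W → W → Prop}
    {C : U → U → Prop} {f : V → W} {g : W → U}
    (hf : IsDigraphMap A B f) (hg : IsDigraphMap B C g) :
    IsDigraphMap A C (g ∘ f) := by
  intro v w hvw
  rcases hf v w hvw with h | h
  · exact hg _ _ h
  · exact Or.inr (congrArg g h)

/-- Post-composition of a based loop with a based digraph map. -/
def compLoop {V W : Type*} {A : V → V → Prop} {B : W → W → Prop} {x : V} {y : W}
    (f : V → W) (hf : IsDigraphMap A B f) (hx : f x = y) (γ : LoopN V A x) :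
    LoopN W B y :=
  ⟨γ.len, γ.dir, f ∘ γ.toFun, isDigraphMap_comp γ.ismap hf,
    by rw [Function.comp_apply, γ.base0, hx],
    by rw [Function.comp_apply, γ.base1, hx]⟩

/-!
Post-composition with `f` turns a subdivision `φ = ρ ∘ h` into the subdivision
`f ∘ φ = (f ∘ ρ) ∘ h` with the same shrinking map `h`. The loop `f ∘ ρ` need not be minimal
any more, but collapsing consecutive repeated values, one pair at a time, turns it into a
minimal loop of which it is a subdivision. Hence if `φ` and `ψ` subdivide a common minimal
loop, so do `f ∘ φ` and `f ∘ ψ`, and `⟨γ⟩ ↦ ⟨f ∘ γ⟩` is well defined. Arrows of `L̄G` are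
carried to arrows by applying `f` pointwise to the witnessing representatives, and the
functor laws already hold on representatives.
-/

section LineDigraph

variable {V : Type*} {A : V → V → Prop}

theorem IsDigraphMap.adj_or_eq {W : Type*} {B : W → W → Prop} {f : V → W}
    (hf : IsDigraphMap A B f) {v w : V} (h : A v w ∨ v = w) : B (f v) (f w) ∨ f v = f w :=
  h.elim (hf v w) fun h => Or.inr (congrArg f h)

theorem isDigraphMap_lineAdj_of_step {m n : ℕ} {dm dn : ℕ → Bool} {fm fn : ℕ → V}
    (hfn : IsDigraphMap (lineAdj n dn) A fn)
    (hstep : ∀ j < m, ∃ k < n, dm j = dn k ∧ fm j = fn k ∧ fm (j + 1) = fn (k + 1)) :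
    IsDigraphMap (lineAdj m dm) A fm := by
  rintro v w (⟨rfl, hv, hd⟩ | ⟨rfl, hw, hd⟩)
  · obtain ⟨k, hk, hdk, h₀, h₁⟩ := hstep v hv
    rw [h₀, h₁]
    exact hfn _ _ (Or.inl ⟨rfl, hk, hdk ▸ hd⟩)
  · obtain ⟨k, hk, hdk, h₀, h₁⟩ := hstep w hw
    rw [h₀, h₁]
    exact hfn _ _ (Or.inr ⟨rfl, hk, hdk ▸ hd⟩)

theorem isShrinking_id (n : ℕ) (d : ℕ → Bool) : IsShrinking n n d d id :=
  ⟨fun _ _ h => Or.inl h, rfl, rfl, fun _ _ hij _ => hij⟩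

theorem isShrinking_of_step {N m : ℕ} {dN dm : ℕ → Bool} {h : ℕ → ℕ} (h₀ : h 0 = 0)
    (hN : h N = m)
    (hstep : ∀ j < N, h (j + 1) = h j ∨ (h (j + 1) = h j + 1 ∧ h j < m ∧ dm (h j) = dN j)) :
    IsShrinking N m dN dm h := by
  refine ⟨?_, h₀, hN, fun i j hij hjN => ?_⟩
  · rintro v w (⟨rfl, hv, hd⟩ | ⟨rfl, hw, hd⟩)
    · rcases hstep v hv with heq | ⟨hsucc, hlt, hdir⟩
      · exact Or.inr heq.symm
      · exact Or.inl (Or.inl ⟨hsucc, hlt, hdir ▸ hd⟩)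
    · rcases hstep w hw with heq | ⟨hsucc, hlt, hdir⟩
      · exact Or.inr heq
      · exact Or.inl (Or.inr ⟨hsucc, hlt, hdir ▸ hd⟩)
  · induction j, hij using Nat.le_induction with
    | base => exact le_rfl
    | succ j _ ih =>
      refine (ih (by omega)).trans ?_
      rcases hstep j (by omega) with heq | ⟨hsucc, -⟩ <;> omega

end LineDigraph

section Subdivision

variable {V : Type*} {A : V → V → Prop} {x : V}

theorem IsSubdivOfL.refl (φ : LoopN V A x) : IsSubdivOfL φ φ :=
  ⟨id, isShrinking_id _ _, fun _ _ => rfl⟩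

theorem IsSubdivOfL.trans {φ ψ ρ : LoopN V A x} (hφψ : IsSubdivOfL φ ψ)
    (hψρ : IsSubdivOfL ψ ρ) : IsSubdivOfL φ ρ := by
  obtain ⟨h, ⟨hmap, h₀, hN, hmono⟩, hval⟩ := hφψ
  obtain ⟨k, ⟨kmap, k₀, kN, kmono⟩, kval⟩ := hψρ
  have h_le : ∀ i ≤ φ.len, h i ≤ ψ.len := fun i hi => hN ▸ hmono i φ.len hi le_rfl
  refine ⟨k ∘ h, ⟨isDigraphMap_comp hmap kmap, ?_, ?_, ?_⟩, fun i hi => ?_⟩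
  · simp only [Function.comp_apply, h₀, k₀]
  · simp only [Function.comp_apply, hN, kN]
  · exact fun i j hij hj => kmono _ _ (hmono i j hij hj) (h_le j hj)
  · rw [hval i hi, kval (h i) (h_le i hi), Function.comp_apply]

theorem minimalLoop_constLoopN : MinimalLoop (constLoopN V A x) :=
  fun _ hi => absurd hi (Nat.not_lt_zero _)

namespace LoopN

/-- Deleting the vertex `i` of a line digraph, the new vertex `j` is the old vertex
`skipIdx i j`. -/
def skipIdx (i j : ℕ) : ℕ := if j < i then j else j + 1

def mergeIdx (i j : ℕ) : ℕ := if j ≤ i then j else j - 1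

theorem skipIdx_mergeIdx {i j : ℕ} (hji : j ≠ i) : skipIdx i (mergeIdx i j) = j := by
  unfold skipIdx mergeIdx; split_ifs <;> omega

def collapse (γ : LoopN V A x) (i : ℕ) (hi : i < γ.len) (he : γ.toFun i = γ.toFun (i + 1)) :
    LoopN V A x where
  len := γ.len - 1
  dir := γ.dir ∘ skipIdx i
  toFun := γ.toFun ∘ skipIdx i
  ismap := by
    refine isDigraphMap_lineAdj_of_step γ.ismap fun j hj =>
      ⟨skipIdx i j, by unfold skipIdx; split_ifs <;> omega, rfl, rfl, ?_⟩
    simp only [Function.comp_apply, skipIdx]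
    -- the new edge between `i - 1` and `i` ends at `γ (i + 1) = γ i`: it is an old edge
    by_cases hji : j + 1 = i
    · subst hji; simp [he]
    · congr 1; split_ifs <;> omega
  base0 := by
    simp only [Function.comp_apply, skipIdx]
    split_ifs with hi0
    · exact γ.base0
    · obtain rfl : i = 0 := by omega
      rw [← he, γ.base0]
  base1 := by
    simp only [Function.comp_apply, skipIdx, if_neg (show ¬ γ.len - 1 < i by omega),
      Nat.sub_add_cancel (show 1 ≤ γ.len by omega), γ.base1]

theorem isSubdivOfL_collapse (γ : LoopN V A x) (i : ℕ) (hi : i < γ.len)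
    (he : γ.toFun i = γ.toFun (i + 1)) : IsSubdivOfL γ (γ.collapse i hi he) := by
  refine ⟨mergeIdx i, isShrinking_of_step (by simp [mergeIdx])
    (by simp [mergeIdx, collapse, show ¬ γ.len ≤ i by omega]) fun j hj => ?_, fun j _ => ?_⟩
  · by_cases hji : j = i
    · subst hji; exact Or.inl (by simp [mergeIdx])
    · refine Or.inr ⟨by unfold mergeIdx; split_ifs <;> omega,
        by simp only [collapse, mergeIdx]; split_ifs <;> omega, ?_⟩
      simp only [collapse, Function.comp_apply, skipIdx_mergeIdx hji]
  · simp only [collapse, Function.comp_apply]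
    by_cases hji : j = i
    · subst hji; simp [mergeIdx, skipIdx, he]
    · rw [skipIdx_mergeIdx hji]

theorem exists_minimalLoop_isSubdivOfL (γ : LoopN V A x) :
    ∃ ρ : LoopN V A x, MinimalLoop ρ ∧ IsSubdivOfL γ ρ := by
  induction hn : γ.len using Nat.strong_induction_on generalizing γ with
  | _ n ih =>
    by_cases hmin : MinimalLoop γ
    · exact ⟨γ, hmin, IsSubdivOfL.refl γ⟩
    · obtain ⟨i, hi, he⟩ : ∃ i < γ.len, γ.toFun i = γ.toFun (i + 1) := by
        simpa [MinimalLoop] using hmin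
      obtain ⟨ρ, hρ, hsub⟩ := ih _ (by simp only [collapse]; omega) (γ.collapse i hi he) rfl
      exact ⟨ρ, hρ, (γ.isSubdivOfL_collapse i hi he).trans hsub⟩

end LoopN

variable {W : Type*} {B : W → W → Prop} {y : W} {f : V → W}

theorem IsSubdivOfL.compLoop (hf : IsDigraphMap A B f) (hx : f x = y)
    {φ ρ : LoopN V A x} (h : IsSubdivOfL φ ρ) :
    IsSubdivOfL (_root_.compLoop f hf hx φ) (_root_.compLoop f hf hx ρ) :=
  let ⟨k, hk, hval⟩ := h
  ⟨k, hk, fun i hi => congrArg f (hval i hi)⟩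

theorem SubdivRelL.compLoop (hf : IsDigraphMap A B f) (hx : f x = y)
    {φ ψ : LoopN V A x} (h : SubdivRelL V A x φ ψ) :
    SubdivRelL W B y (_root_.compLoop f hf hx φ) (_root_.compLoop f hf hx ψ) := by
  obtain ⟨ρ, -, hφ, hψ⟩ := h
  obtain ⟨σ, hσ, hρσ⟩ := (_root_.compLoop f hf hx ρ).exists_minimalLoop_isSubdivOfL
  exact ⟨σ, hσ, (hφ.compLoop hf hx).trans hρσ, (hψ.compLoop hf hx).trans hρσ⟩

end Subdivision

namespace LbarV

variable {V W U : Type*} {A : V → V → Prop} {B : W → W → Prop} {C : U → U → Prop}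
  {x : V} {y : W} {z : U} {f : V → W} {g : W → U}

/-- The map `L̄f : L̄G → L̄H`, `⟨γ⟩ ↦ ⟨f ∘ γ⟩`. -/
def map (f : V → W) (hf : IsDigraphMap A B f) (hx : f x = y) : LbarV V A x → LbarV W B y :=
  Quot.map (compLoop f hf hx) fun _ _ => SubdivRelL.compLoop hf hx

theorem isDigraphMap_map (hf : IsDigraphMap A B f) (hx : f x = y) :
    IsDigraphMap (LbarAdj V A x) (LbarAdj W B y) (map f hf hx) := by
  rintro _ _ ⟨φ, ψ, rfl, rfl, hlen, hdir, hadj⟩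
  exact Or.inl ⟨compLoop f hf hx φ, compLoop f hf hx ψ, rfl, rfl, hlen, hdir,
    fun i hi => hf.adj_or_eq (hadj i hi)⟩

theorem map_constLoopN (hf : IsDigraphMap A B f) (hx : f x = y) :
    map f hf hx (Quot.mk _ (constLoopN V A x)) = Quot.mk _ (constLoopN W B y) :=
  Quot.sound ⟨constLoopN W B y, minimalLoop_constLoopN,
    ⟨id, isShrinking_id _ _, fun _ _ => hx⟩, IsSubdivOfL.refl _⟩

theorem map_comp (hf : IsDigraphMap A B f) (hg : IsDigraphMap B C g) (hx : f x = y)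
    (hy : g y = z) :
    map (g ∘ f) (isDigraphMap_comp hf hg) ((congrArg g hx).trans hy) =
      map g hg hy ∘ map f hf hx :=
  funext <| Quot.ind fun _ => rfl

theorem map_id : map id (fun _ _ h => Or.inl h) (rfl : id x = x) = (id : LbarV V A x → _) :=
  funext <| Quot.ind fun _ => rfl

end LbarV

/-- Functoriality of the reduced loop digraph: a based digraph map `f : (G,∗) → (H,∗)`
induces a well-defined based digraph map `L̄f : L̄G → L̄H`, `⟨γ⟩ ↦ ⟨f ∘ γ⟩`, and this
assignment satisfies `L̄(g ∘ f) = L̄g ∘ L̄f` and `L̄(id) = id`. -/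
theorem stmt19 {V W U : Type*} {A : V → V → Prop} {B : W → W → Prop}
    {C : U → U → Prop} {x : V} {y : W} {z : U}
    (f : V → W) (g : W → U)
    (hf : IsDigraphMap A B f) (hg : IsDigraphMap B C g)
    (hx : f x = y) (hy : g y = z) :
    ∃ (Lf : LbarV V A x → LbarV W B y) (Lg : LbarV W B y → LbarV U C z)
      (Lgf : LbarV V A x → LbarV U C z),
      IsDigraphMap (LbarAdj V A x) (LbarAdj W B y) Lf ∧
      Lf (Quot.mk (SubdivRelL V A x) (constLoopN V A x)) =
        Quot.mk (SubdivRelL W B y) (constLoopN W B y) ∧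
      (∀ γ, Lf (Quot.mk (SubdivRelL V A x) γ) =
        Quot.mk (SubdivRelL W B y) (compLoop f hf hx γ)) ∧
      IsDigraphMap (LbarAdj W B y) (LbarAdj U C z) Lg ∧
      (∀ γ, Lg (Quot.mk (SubdivRelL W B y) γ) =
        Quot.mk (SubdivRelL U C z) (compLoop g hg hy γ)) ∧
      (∀ γ, Lgf (Quot.mk (SubdivRelL V A x) γ) =
        Quot.mk (SubdivRelL U C z)
          (compLoop (g ∘ f) (isDigraphMap_comp hf hg)
            (by rw [Function.comp_apply, hx]; exact hy) γ)) ∧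
      Lgf = Lg ∘ Lf ∧
      ∀ Lid : LbarV V A x → LbarV V A x,
        (∀ γ, Lid (Quot.mk (SubdivRelL V A x) γ) =
          Quot.mk (SubdivRelL V A x)
            (compLoop id (fun v w h => Or.inl h) rfl γ)) → Lid = id := by
  refine ⟨LbarV.map f hf hx, LbarV.map g hg hy, LbarV.map (g ∘ f) _ _,
    LbarV.isDigraphMap_map hf hx, LbarV.map_constLoopN hf hx, fun _ => rfl,
    LbarV.isDigraphMap_map hg hy, fun _ => rfl, fun _ => rfl, LbarV.map_comp hf hg hx hy,
    fun Lid hLid => ?_⟩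
  have hLid_eq_map : Lid = LbarV.map id (fun _ _ h => Or.inl h) rfl :=
    funext <| Quot.ind hLid
  rw [hLid_eq_map, LbarV.map_id]
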